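/- Let S = ⟨n₁,n₂,n₃,n₄⟩ be an almost symmetric numerical semigroup. Then there do not exist three distinct elements f, f', f'' ∈ PF(S) \ {F(S)} of the form f = λ_{ji}·n_i - n_j, f' = λ_{ki}·n_i - n_k, f'' = λ_{hi}·n_i - n_h, where {i,j,k,h} = {1,2,3,4}. -/

import Mathlib

/-- The numerical semigroup generated by `n`, viewed inside `ℤ`. -/
def NS {e : ℕ} (n : Fin e → ℕ) : Set ℤ :=
  {x | ∃ a : Fin e → ℕ, x = ∑ j, (a j : ℤ) * n j}

/-- Pseudo-Frobenius numbers of the numerical semigroup generated by `n`. -/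
def PF {e : ℕ} (n : Fin e → ℕ) : Set ℤ :=
  {x | x ∉ NS n ∧ ∀ i, x + (n i : ℤ) ∈ NS n}

/-- `F` is the Frobenius number: the maximum of `ℤ \ S`. -/
def IsFrob {e : ℕ} (n : Fin e → ℕ) (F : ℤ) : Prop :=
  F ∉ NS n ∧ ∀ x : ℤ, F < x → x ∈ NS n

/-- Almost symmetry with respect to the Frobenius number `F`. -/
def AlmostSym {e : ℕ} (n : Fin e → ℕ) (F : ℤ) : Prop :=
  ∀ x : ℤ, x ∉ NS n → F - x ∉ NS n → (x ∈ PF n ∧ F - x ∈ PF n)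

/-- `A` is an RF-matrix for `f`. -/
def IsRF {e : ℕ} (n : Fin e → ℕ) (f : ℤ) (A : Matrix (Fin e) (Fin e) ℤ) : Prop :=
  (∀ i, A i i = -1) ∧ (∀ i j, i ≠ j → 0 ≤ A i j) ∧
    (∀ i, ∑ j, A i j * (n j : ℤ) = f)

/-- `K = λ_{ij} = max {K ∈ ℕ : K·n_j - n_i ∉ S}`. -/
def IsLam {e : ℕ} (n : Fin e → ℕ) (i j : Fin e) (K : ℕ) : Prop :=
  ((K : ℤ) * n j - n i ∉ NS n) ∧
    ∀ L : ℕ, ((L : ℤ) * n j - n i ∉ NS n) → L ≤ K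

/-- `n` is a minimal generating system. -/
def MinGen {e : ℕ} (n : Fin e → ℕ) : Prop :=
  ∀ i, ¬ ∃ a : Fin e → ℕ, a i = 0 ∧ (n i : ℤ) = ∑ j, (a j : ℤ) * n j

/-!
Fix `i`, let `{i, p, q, r} = {1, 2, 3, 4}` and write `f_p = λ_{pi} n_i - n_p`. Almost symmetry
makes `F - f_p` pseudo-Frobenius as well, and no difference of two pseudo-Frobenius numbers lies
in `S`. Expanding `F - f_p + n_i` and (when `λ_{pi} ≤ λ_{qi}`) `F - f_q + n_p` in the generators
with these facts gives `F - f_p + n_i = Q n_q + R n_r` and, if `f_p + f_q ≠ F`,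
`F - f_p - f_q = τ n_r - κ n_i` with `1 ≤ κ ≤ λ_{qi}`; maximality of `λ_{qi}` then forces
`R < τ`. If neither `f_p + f_q` nor `f_p + f_r` were `F`, these identities would together write
`F - f_p` as an element of `S`. So every `f_p` has a partner `f_q` with `f_p + f_q = F`, which is
impossible for three distinct `f`'s.
-/

open Finset

section

variable {e : ℕ} {n : Fin e → ℕ} {F x y : ℤ}

theorem add_mem_NS (hx : x ∈ NS n) (hy : y ∈ NS n) : x + y ∈ NS n := by
  obtain ⟨a, rfl⟩ := hx
  obtain ⟨b, rfl⟩ := hy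
  exact ⟨a + b, by simp only [Pi.add_apply, Nat.cast_add, add_mul, sum_add_distrib]⟩

theorem natCast_mul_mem_NS (A : ℕ) (l : Fin e) : (A : ℤ) * n l ∈ NS n :=
  ⟨Pi.single l A, by simp [Pi.single_apply]⟩

theorem sum_add_single_mul (a : Fin e → ℕ) (l : Fin e) :
    ∑ m, ((a + Pi.single l 1 : Fin e → ℕ) m : ℤ) * n m = ∑ m, (a m : ℤ) * n m + n l := by
  simp [add_mul, sum_add_distrib, Pi.single_apply]

theorem exists_sub_mem_NS_of_ne_zero (hx : x ∈ NS n) (hx0 : x ≠ 0) :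
    ∃ l, x - n l ∈ NS n := by
  obtain ⟨a, rfl⟩ := hx
  obtain ⟨l, hl⟩ : ∃ l, a l ≠ 0 := by
    by_contra! h
    exact hx0 (by simp [h])
  have hle : Pi.single l 1 ≤ a := by
    intro m
    rcases eq_or_ne m l with rfl | hm <;> simp [*, Nat.one_le_iff_ne_zero]
  obtain ⟨b, rfl⟩ : ∃ b, a = b + Pi.single l 1 :=
    ⟨a - Pi.single l 1, (tsub_add_cancel_of_le hle).symm⟩
  exact ⟨l, b, by rw [sum_add_single_mul, add_sub_cancel_right]⟩

theorem add_mem_NS_of_mem_PF (hx : x ∈ PF n) (hy : y ∈ NS n) (hy0 : y ≠ 0) : x + y ∈ NS n := by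
  obtain ⟨l, hl⟩ := exists_sub_mem_NS_of_ne_zero hy hy0
  simpa using add_mem_NS (hx.2 l) hl

theorem sub_notMem_NS_of_mem_PF (hx : x ∈ PF n) (hy : y ∈ PF n) (hxy : x ≠ y) :
    x - y ∉ NS n := fun h =>
  hx.1 (by simpa using add_mem_NS_of_mem_PF hy h (sub_ne_zero.mpr hxy))

theorem AlmostSym.sub_mem_PF (hAS : AlmostSym n F) (hF : F ∉ NS n) (hx : x ∈ PF n)
    (hxF : x ≠ F) : F - x ∈ PF n := by
  refine (hAS x hx.1 fun h => ?_).2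
  exact hF (by simpa using add_mem_NS_of_mem_PF hx h (sub_ne_zero.mpr hxF.symm))

theorem IsLam.mul_sub_notMem_NS {p i : Fin e} {a L : ℕ} (hl : IsLam n p i a) (hL : L ≤ a) :
    (L : ℤ) * n i - n p ∉ NS n := fun h => by
  obtain ⟨d, rfl⟩ := Nat.exists_eq_add_of_le hL
  have h' : ((L + d : ℕ) : ℤ) * n i - n p = (L * n i - n p) + d * n i := by push_cast; ring
  exact hl.1 (h' ▸ add_mem_NS h (natCast_mul_mem_NS d i))

theorem MinGen.pos (hmin : MinGen n) (l : Fin e) : 0 < n l := by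
  by_contra! h
  exact hmin l ⟨0, rfl, by simp [Nat.le_zero.mp h]⟩

theorem MinGen.sub_notMem_NS (hmin : MinGen n) {i p : Fin e} (hpi : p ≠ i) :
    (n i : ℤ) - n p ∉ NS n := by
  rintro ⟨a, ha⟩
  rcases Nat.eq_zero_or_pos (a i) with hai | hai
  · refine hmin i ⟨a + Pi.single p 1, by simp [hai, hpi.symm], ?_⟩
    rw [sum_add_single_mul, ← ha]
    ring
  · have hsum : (a i : ℤ) * n i ≤ ∑ m, (a m : ℤ) * n m :=
      single_le_sum (f := fun m => (a m : ℤ) * n m) (fun _ _ => by positivity) (mem_univ i)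
    have hai' : (n i : ℤ) ≤ a i * n i :=
      le_mul_of_one_le_left (by positivity) (by exact_mod_cast hai)
    have hp : (0 : ℤ) < n p := by exact_mod_cast hmin.pos p
    linarith

theorem MinGen.one_le_of_mul_sub_mem_PF (hmin : MinGen n) {i p : Fin e} {a : ℕ} (hpi : p ≠ i)
    (hf : (a : ℤ) * n i - n p ∈ PF n) : 1 ≤ a := by
  rw [Nat.one_le_iff_ne_zero]
  rintro rfl
  exact hmin.sub_notMem_NS hpi (by convert hf.2 i using 1; push_cast; ring)

theorem IsLam.lt_of_add_eq_of_sub_eq {i q r : Fin e} {b Q R τ κ : ℕ} (hl : IsLam n q i b)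
    (hκ : 1 ≤ κ) (hκb : κ ≤ b) (hrow : y + n i = Q * n q + R * n r)
    (hq : y - (b * n i - n q) = τ * n r - κ * n i) : R < τ := by
  by_contra! hτ
  obtain ⟨s, rfl⟩ := Nat.exists_eq_add_of_le hκb
  obtain ⟨d, rfl⟩ := Nat.exists_eq_add_of_le hτ
  apply hl.mul_sub_notMem_NS (L := s + 1) (by omega)
  have h : ((s + 1 : ℕ) : ℤ) * n i - n q = Q * n q + d * n r := by
    push_cast at hrow hq ⊢
    linear_combination hrow - hq
  rw [h]
  exact add_mem_NS (natCast_mul_mem_NS Q q) (natCast_mul_mem_NS d r)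

theorem mem_NS_of_add_eq_of_sub_eq {i q r : Fin e} {b c Q R τ₁ κ₁ τ₂ κ₂ : ℕ}
    (hlq : IsLam n q i b) (hlr : IsLam n r i c) (hκ₁ : 1 ≤ κ₁) (hκ₁b : κ₁ ≤ b) (hκ₂ : 1 ≤ κ₂)
    (hκ₂c : κ₂ ≤ c) (hrow : y + n i = Q * n q + R * n r)
    (hq : y - (b * n i - n q) = τ₁ * n r - κ₁ * n i)
    (hr : y - (c * n i - n r) = τ₂ * n q - κ₂ * n i) : y ∈ NS n := by
  have hR := hlq.lt_of_add_eq_of_sub_eq hκ₁ hκ₁b hrow hq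
  have hQ := hlr.lt_of_add_eq_of_sub_eq hκ₂ hκ₂c (by rw [hrow, add_comm]) hr
  obtain ⟨s, rfl⟩ := Nat.exists_eq_add_of_le hκ₁b
  obtain ⟨t, rfl⟩ := Nat.exists_eq_add_of_le hκ₂c
  obtain ⟨u, rfl⟩ := Nat.exists_eq_add_of_lt hR
  obtain ⟨v, rfl⟩ := Nat.exists_eq_add_of_lt hQ
  have h : y = (s + t + 1 : ℕ) * n i + v * n q + u * n r := by
    push_cast at hrow hq hr ⊢
    linear_combination hq + hr - hrow
  rw [h]
  exact add_mem_NS (add_mem_NS (natCast_mul_mem_NS _ i) (natCast_mul_mem_NS v q))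
    (natCast_mul_mem_NS u r)

end

def Distinct4 (i p q r : Fin 4) : Prop :=
  p ≠ i ∧ q ≠ i ∧ r ≠ i ∧ p ≠ q ∧ p ≠ r ∧ q ≠ r

namespace Distinct4

variable {n : Fin 4 → ℕ} {F : ℤ} {i p q r : Fin 4}

theorem swap₂₃ (hd : Distinct4 i p q r) : Distinct4 i q p r := by
  obtain ⟨hpi, hqi, hri, hpq, hpr, hqr⟩ := hd
  exact ⟨hqi, hpi, hri, hpq.symm, hqr, hpr⟩

theorem swap₃₄ (hd : Distinct4 i p q r) : Distinct4 i p r q := by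
  obtain ⟨hpi, hqi, hri, hpq, hpr, hqr⟩ := hd
  exact ⟨hpi, hri, hqi, hpr, hpq, hqr.symm⟩

theorem sum_univ {M : Type*} [AddCommMonoid M] (hd : Distinct4 i p q r) (c : Fin 4 → M) :
    ∑ l, c l = c i + c p + c q + c r := by
  obtain ⟨hpi, hqi, hri, hpq, hpr, hqr⟩ := hd
  have hi : i ∉ ({p, q, r} : Finset (Fin 4)) := by simp [hpi.symm, hqi.symm, hri.symm]
  have hp : p ∉ ({q, r} : Finset (Fin 4)) := by simp [hpq, hpr]
  have huniv : ({i, p, q, r} : Finset (Fin 4)) = univ := eq_univ_of_card _ <| by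
    rw [card_insert_of_notMem hi, card_insert_of_notMem hp, card_pair hqr]
    rfl
  rw [← huniv, sum_insert hi, sum_insert hp, sum_pair hqr, add_assoc, add_assoc]

theorem mem_NS_iff (hd : Distinct4 i p q r) {x : ℤ} :
    x ∈ NS n ↔ ∃ A B C D : ℕ, x = A * n i + B * n p + C * n q + D * n r := by
  constructor
  · rintro ⟨a, rfl⟩
    exact ⟨a i, a p, a q, a r, hd.sum_univ _⟩
  · rintro ⟨A, B, C, D, rfl⟩
    exact add_mem_NS (add_mem_NS (add_mem_NS (natCast_mul_mem_NS A i) (natCast_mul_mem_NS B p))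
      (natCast_mul_mem_NS C q)) (natCast_mul_mem_NS D r)

theorem exists_frob_sub_add_eq (hd : Distinct4 i p q r) (hF : F ∉ NS n) (hAS : AlmostSym n F)
    {a : ℕ} (ha : 1 ≤ a) (hf : (a : ℤ) * n i - n p ∈ PF n) (hfF : (a : ℤ) * n i - n p ≠ F) :
    ∃ Q R : ℕ, F - (a * n i - n p) + n i = Q * n q + R * n r := by
  have hg := hAS.sub_mem_PF hF hf hfF
  obtain ⟨A, B, C, D, hsum⟩ := hd.mem_NS_iff.1 (hg.2 i)
  obtain ⟨a, rfl⟩ := Nat.exists_eq_add_of_le' ha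
  rcases A with _ | A
  · rcases B with _ | B
    · exact ⟨C, D, by push_cast at hsum ⊢; linarith⟩
    · exact absurd (hd.mem_NS_iff.2 ⟨a, B, C, D, by push_cast at hsum ⊢; linarith⟩) hF
  · exact absurd (hd.mem_NS_iff.2 ⟨A, B, C, D, by push_cast at hsum ⊢; linarith⟩) hg.1

theorem exists_frob_sub_sub_eq_of_le {u v t : Fin 4} (hd : Distinct4 i u v t) (hF : F ∉ NS n)
    (hAS : AlmostSym n F) {a₁ a₂ : ℕ} (hle : a₁ ≤ a₂)
    (hf₁ : (a₁ : ℤ) * n i - n u ∈ PF n) (hf₁F : (a₁ : ℤ) * n i - n u ≠ F)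
    (hf₂ : (a₂ : ℤ) * n i - n v ∈ PF n) (hf₂F : (a₂ : ℤ) * n i - n v ≠ F)
    (hne : F ≠ (a₁ * n i - n u) + (a₂ * n i - n v)) :
    ∃ τ κ : ℕ, 1 ≤ κ ∧ κ ≤ a₁ ∧ F - (a₁ * n i - n u) - (a₂ * n i - n v) = τ * n t - κ * n i := by
  have hg₁ := hAS.sub_mem_PF hF hf₁ hf₁F
  have hg₂ := hAS.sub_mem_PF hF hf₂ hf₂F
  obtain ⟨A, B, C, D, hsum⟩ := hd.mem_NS_iff.1 (hg₂.2 u)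
  obtain ⟨d, rfl⟩ := Nat.exists_eq_add_of_le hle
  rcases B with _ | B
  swap
  · exact absurd (hd.mem_NS_iff.2 ⟨A, B, C, D, by push_cast at hsum ⊢; linarith⟩) hg₂.1
  -- `F - f₁ = (F - f₂ + n_u - n_v) + (a₂ - a₁) n_i`, which is where `a₁ ≤ a₂` enters
  rcases C with _ | C
  swap
  · exact absurd (hd.mem_NS_iff.2 ⟨A + d, 0, C, D, by push_cast at hsum ⊢; linarith⟩) hg₁.1
  rcases lt_or_ge A a₁ with hA | hA
  · obtain ⟨κ, rfl⟩ := Nat.exists_eq_add_of_lt hA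
    exact ⟨D, κ + 1, by omega, by omega, by push_cast at hsum ⊢; linarith⟩
  · obtain ⟨c, rfl⟩ := Nat.exists_eq_add_of_le hA
    refine absurd (hd.mem_NS_iff.2 ⟨c, 0, 0, D, ?_⟩)
      (sub_notMem_NS_of_mem_PF hg₂ hf₁ fun h => hne (by push_cast at h ⊢; linarith))
    push_cast at hsum ⊢
    linarith

theorem exists_frob_sub_sub_eq {u v t : Fin 4} (hd : Distinct4 i u v t) (hF : F ∉ NS n)
    (hAS : AlmostSym n F) {a₁ a₂ : ℕ}
    (hf₁ : (a₁ : ℤ) * n i - n u ∈ PF n) (hf₁F : (a₁ : ℤ) * n i - n u ≠ F)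
    (hf₂ : (a₂ : ℤ) * n i - n v ∈ PF n) (hf₂F : (a₂ : ℤ) * n i - n v ≠ F)
    (hne : F ≠ (a₁ * n i - n u) + (a₂ * n i - n v)) :
    ∃ τ κ : ℕ, 1 ≤ κ ∧ κ ≤ min a₁ a₂ ∧
      F - (a₁ * n i - n u) - (a₂ * n i - n v) = τ * n t - κ * n i := by
  rcases le_total a₁ a₂ with hle | hle
  · obtain ⟨τ, κ, hκ, hκa, h⟩ := hd.exists_frob_sub_sub_eq_of_le hF hAS hle hf₁ hf₁F hf₂ hf₂F hne
    exact ⟨τ, κ, hκ, le_min hκa (hκa.trans hle), h⟩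
  · obtain ⟨τ, κ, hκ, hκa, h⟩ := hd.swap₂₃.exists_frob_sub_sub_eq_of_le hF hAS hle hf₂ hf₂F hf₁ hf₁F
      (by rwa [add_comm])
    exact ⟨τ, κ, hκ, le_min (hκa.trans hle) hκa, by rw [← h]; ring⟩

theorem frob_eq_add_or_frob_eq_add (hd : Distinct4 i p q r) (hmin : MinGen n) (hF : F ∉ NS n)
    (hAS : AlmostSym n F) {a b c : ℕ} (hlq : IsLam n q i b) (hlr : IsLam n r i c)
    (hfp : (a : ℤ) * n i - n p ∈ PF n) (hfpF : (a : ℤ) * n i - n p ≠ F)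
    (hfq : (b : ℤ) * n i - n q ∈ PF n) (hfqF : (b : ℤ) * n i - n q ≠ F)
    (hfr : (c : ℤ) * n i - n r ∈ PF n) (hfrF : (c : ℤ) * n i - n r ≠ F) :
    F = (a * n i - n p) + (b * n i - n q) ∨ F = (a * n i - n p) + (c * n i - n r) := by
  by_contra! ⟨hneq, hner⟩
  have ha := hmin.one_le_of_mul_sub_mem_PF hd.1 hfp
  obtain ⟨Q, R, hrow⟩ := hd.exists_frob_sub_add_eq hF hAS ha hfp hfpF
  obtain ⟨τ₁, κ₁, hκ₁, hκ₁b, hq⟩ := hd.exists_frob_sub_sub_eq hF hAS hfp hfpF hfq hfqF hneq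
  obtain ⟨τ₂, κ₂, hκ₂, hκ₂c, hr⟩ :=
    hd.swap₃₄.exists_frob_sub_sub_eq hF hAS hfp hfpF hfr hfrF hner
  exact (hAS.sub_mem_PF hF hfp hfpF).1 <| mem_NS_of_add_eq_of_sub_eq hlq hlr hκ₁
    (hκ₁b.trans (min_le_right _ _)) hκ₂ (hκ₂c.trans (min_le_right _ _)) hrow hq hr

end Distinct4

theorem stmt9_general (n : Fin 4 → ℕ)
    (hmin : MinGen n)
    (F : ℤ) (hF : IsFrob n F) (hAS : AlmostSym n F) :
    ¬ ∃ (i j k h : Fin 4) (f f' f'' : ℤ) (a b c : ℕ),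
      j ≠ i ∧ k ≠ i ∧ h ≠ i ∧ j ≠ k ∧ j ≠ h ∧ k ≠ h ∧
      f ≠ f' ∧ f ≠ f'' ∧ f' ≠ f'' ∧
      f ∈ PF n ∧ f ≠ F ∧ f' ∈ PF n ∧ f' ≠ F ∧ f'' ∈ PF n ∧ f'' ≠ F ∧
      IsLam n j i a ∧ f = (a : ℤ) * n i - n j ∧
      IsLam n k i b ∧ f' = (b : ℤ) * n i - n k ∧
      IsLam n h i c ∧ f'' = (c : ℤ) * n i - n h := by
  rintro ⟨i, j, k, h, _, _, _, a, b, c, hji, hki, hhi, hjk, hjh, hkh, hff', hff'', hf'f'',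
    hf, hfF, hf', hf'F, hf'', hf''F, hla, rfl, hlb, rfl, hlc, rfl⟩
  have hd : Distinct4 i j k h := ⟨hji, hki, hhi, hjk, hjh, hkh⟩
  rcases hd.frob_eq_add_or_frob_eq_add hmin hF.1 hAS hlb hlc hf hfF hf' hf'F hf'' hf''F
    with hsum | hsum
  · rcases hd.swap₃₄.swap₂₃.frob_eq_add_or_frob_eq_add hmin hF.1 hAS hla hlb hf'' hf''F hf hfF
      hf' hf'F with h' | h'
    · exact hf'f'' (by linarith)
    · exact hff'' (by linarith)
  · rcases hd.swap₂₃.frob_eq_add_or_frob_eq_add hmin hF.1 hAS hla hlc hf' hf'F hf hfF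
      hf'' hf''F with h' | h'
    · exact hf'f'' (by linarith)
    · exact hff' (by linarith)

theorem stmt9 (n : Fin 4 → ℕ)
    (hpos : ∀ i, 0 < n i)
    (hgcd : Finset.univ.gcd n = 1)
    (hmin : MinGen n)
    (F : ℤ) (hF : IsFrob n F) (hAS : AlmostSym n F) :
    ¬ ∃ (i j k h : Fin 4) (f f' f'' : ℤ) (a b c : ℕ),
      j ≠ i ∧ k ≠ i ∧ h ≠ i ∧ j ≠ k ∧ j ≠ h ∧ k ≠ h ∧
      f ≠ f' ∧ f ≠ f'' ∧ f' ≠ f'' ∧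
      f ∈ PF n ∧ f ≠ F ∧ f' ∈ PF n ∧ f' ≠ F ∧ f'' ∈ PF n ∧ f'' ≠ F ∧
      IsLam n j i a ∧ f = (a : ℤ) * n i - n j ∧
      IsLam n k i b ∧ f' = (b : ℤ) * n i - n k ∧
      IsLam n h i c ∧ f'' = (c : ℤ) * n i - n h :=
  stmt9_general n hmin F hF hAS
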